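/- Let n ≥ 2, let A be a real n×n singular irreducible M-matrix, and let L_G be the FSAI lower triangular factor associated with an admissible pattern S_L. Then the product L_G A is a singular M-matrix. -/

import Mathlib

open Matrix

/-- The spectral radius of a real matrix: the maximum modulus of its complex
eigenvalues (supremum of moduli of elements of the complex spectrum). -/
noncomputable def specRad {n : ℕ} (B : Matrix (Fin n) (Fin n) ℝ) : ℝ :=
  sSup ((fun z : ℂ => ‖z‖) '' spectrum ℂ (B.map Complex.ofReal))

/-- A real square matrix is a Z-matrix if its off-diagonal entries are nonpositive. -/
def IsZMatrix {n : ℕ} (A : Matrix (Fin n) (Fin n) ℝ) : Prop :=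
  ∀ i j, i ≠ j → A i j ≤ 0

/-- A Z-matrix `A` is a nonsingular M-matrix if `A = s • 1 - B` with `B`
entrywise nonnegative and `s > ρ(B)`. -/
def IsNonsingularMMatrix {n : ℕ} (A : Matrix (Fin n) (Fin n) ℝ) : Prop :=
  IsZMatrix A ∧ ∃ (s : ℝ) (B : Matrix (Fin n) (Fin n) ℝ),
    (∀ i j, 0 ≤ B i j) ∧ specRad B < s ∧ A = s • (1 : Matrix (Fin n) (Fin n) ℝ) - B

/-- A Z-matrix `A` is a singular M-matrix if `A = ρ(B) • 1 - B` with `B`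
entrywise nonnegative. -/
def IsSingularMMatrix {n : ℕ} (A : Matrix (Fin n) (Fin n) ℝ) : Prop :=
  IsZMatrix A ∧ ∃ B : Matrix (Fin n) (Fin n) ℝ,
    (∀ i j, 0 ≤ B i j) ∧ A = specRad B • (1 : Matrix (Fin n) (Fin n) ℝ) - B

/-- A matrix is irreducible if its directed graph (edge `i → j` iff `A i j ≠ 0`)
is strongly connected. -/
def IsIrreducibleMatrix {n : ℕ} (A : Matrix (Fin n) (Fin n) ℝ) : Prop :=
  ∀ i j : Fin n, Relation.ReflTransGen (fun a b : Fin n => A a b ≠ 0) i j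

/-- Lower triangular real matrix. -/
def IsLowerTri {n : ℕ} (L : Matrix (Fin n) (Fin n) ℝ) : Prop :=
  ∀ i j : Fin n, i < j → L i j = 0

/-- Upper triangular real matrix. -/
def IsUpperTri {n : ℕ} (U : Matrix (Fin n) (Fin n) ℝ) : Prop :=
  ∀ i j : Fin n, j < i → U i j = 0

/-- `L` is an FSAI lower triangular factor of `A` for the pattern `S`:
`L` is lower triangular, vanishes off the pattern, and `(L * A) i j = δ i j`
on the pattern. -/
def IsFSAILowerFactor {n : ℕ} (A L : Matrix (Fin n) (Fin n) ℝ)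
    (S : Set (Fin n × Fin n)) : Prop :=
  IsLowerTri L ∧ (∀ p : Fin n × Fin n, p ∉ S → L p.1 p.2 = 0) ∧
    ∀ p : Fin n × Fin n, p ∈ S → (L * A) p.1 p.2 = if p.1 = p.2 then 1 else 0

/-- `U` is an FSAI upper triangular factor of `A` for the pattern `S`:
`U` is upper triangular, vanishes off the pattern, and `(A * U) i j = δ i j`
on the pattern. -/
def IsFSAIUpperFactor {n : ℕ} (A U : Matrix (Fin n) (Fin n) ℝ)
    (S : Set (Fin n × Fin n)) : Prop :=
  IsUpperTri U ∧ (∀ p : Fin n × Fin n, p ∉ S → U p.1 p.2 = 0) ∧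
    ∀ p : Fin n × Fin n, p ∈ S → (A * U) p.1 p.2 = if p.1 = p.2 then 1 else 0

/-!
Write `A = ρ(B) I - B` with `B ≥ 0` irreducible. Perron–Frobenius gives `x > 0` with `A x = 0`,
hence `L A x = 0`. Row `i` of `L` is supported on `J = {k | (i, k) ∈ S}` and solves
`Lᵢ (ρ(B) I - B[J, J]) = eᵢ`. Admissibility makes `J` a proper subset of the indices, so
irreducibility gives `ρ(B[J, J]) < ρ(B)`, and the Neumann series shows
`(ρ(B) I - B[J, J])⁻¹ ≥ 0`; hence `L ≥ 0`. Then `L A` is a Z-matrix with unit diagonal, and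
`I - L A ≥ 0` fixes `x > 0`, so its spectral radius is `1` by the Collatz–Wielandt bound, that is,
`L A = ρ(I - L A) I - (I - L A)`.

The Perron–Frobenius facts are derived from Gelfand's formula through the positivity of the
resolvent `(s I - B)⁻¹`, `s > ρ(B)`, of an irreducible `B ≥ 0`.
-/

open Filter Topology

lemma Matrix.mem_spectrum_iff_exists_mulVec_eq {K ι : Type*} [Field K] [Fintype ι] [DecidableEq ι]
    {M : Matrix ι ι K} {μ : K} : μ ∈ spectrum K M ↔ ∃ v ≠ 0, M *ᵥ v = μ • v := by
  rw [← Matrix.spectrum_toLin', ← Module.End.hasEigenvalue_iff_mem_spectrum]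
  constructor
  · intro h
    obtain ⟨v, hv⟩ := h.exists_hasEigenvector
    exact ⟨v, hv.2, hv.apply_eq_smul⟩
  · rintro ⟨v, hv, h⟩
    exact Module.End.hasEigenvalue_of_hasEigenvector ⟨Module.End.mem_eigenspace_iff.2 h, hv⟩

lemma spectrum.eventually_norm_pow_le_of_spectralRadius_lt {A : Type*} [NormedRing A]
    [NormedAlgebra ℂ A] [CompleteSpace A] {a : A} {r : ℝ}
    (h : spectralRadius ℂ a < ENNReal.ofReal r) : ∀ᶠ k in atTop, ‖a ^ k‖ ≤ r ^ k := by
  filter_upwards [(pow_norm_pow_one_div_tendsto_nhds_spectralRadius a).eventually_lt_const h,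
    eventually_gt_atTop 0] with k hk hk0
  rw [ENNReal.ofReal_lt_ofReal_iff', one_div,
    Real.rpow_inv_lt_iff_of_pos (norm_nonneg _) hk.2.le (by positivity), Real.rpow_natCast] at hk
  exact hk.1.le

section SpectralRadius

variable {n : ℕ}

lemma specRad_nonneg (B : Matrix (Fin n) (Fin n) ℝ) : 0 ≤ specRad B :=
  Real.sSup_nonneg <| by rintro _ ⟨z, -, rfl⟩; exact norm_nonneg z

lemma norm_le_specRad (B : Matrix (Fin n) (Fin n) ℝ) {μ : ℂ}
    (hμ : μ ∈ spectrum ℂ (B.map Complex.ofReal)) : ‖μ‖ ≤ specRad B :=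
  le_csSup ((Matrix.finite_spectrum _).image _).bddAbove ⟨μ, hμ, rfl⟩

lemma abs_le_specRad_of_mulVec_eq {B : Matrix (Fin n) (Fin n) ℝ} {t : ℝ} {v : Fin n → ℝ}
    (hv : v ≠ 0) (h : B *ᵥ v = t • v) : |t| ≤ specRad B := by
  have hmem : (t : ℂ) ∈ spectrum ℂ (B.map Complex.ofReal) := by
    refine Matrix.mem_spectrum_iff_exists_mulVec_eq.2 ⟨fun i => v i, ?_, ?_⟩
    · exact fun h0 => hv (funext fun i => by simpa using congrFun h0 i)
    · ext i
      have := RingHom.map_mulVec Complex.ofRealHom B v i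
      rw [h] at this
      refine this.symm.trans ?_
      simp
  simpa using norm_le_specRad B hmem

section LinftyNorm

attribute [local instance] Matrix.linftyOpSeminormedAddCommGroup Matrix.linftyOpNormedRing
  Matrix.linftyOpNormedAlgebra

lemma Matrix.nnnorm_apply_le_linfty_opNNNorm {α ι κ : Type*} [SeminormedAddCommGroup α]
    [Fintype ι] [Fintype κ] (M : Matrix ι κ α) (i : ι) (j : κ) : ‖M i j‖₊ ≤ ‖M‖₊ := by
  rw [Matrix.linfty_opNNNorm_def]
  exact (Finset.single_le_sum (fun k _ => zero_le) (Finset.mem_univ j)).trans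
    (Finset.le_sup (f := fun i => ∑ k, ‖M i k‖₊) (Finset.mem_univ i))

lemma exists_norm_eq_specRad [NeZero n] (B : Matrix (Fin n) (Fin n) ℝ) :
    ∃ μ ∈ spectrum ℂ (B.map Complex.ofReal), ‖μ‖ = specRad B :=
  ((spectrum.nonempty _).image _).csSup_mem ((Matrix.finite_spectrum _).image _)

lemma eventually_abs_pow_apply_le (B : Matrix (Fin n) (Fin n) ℝ) {r : ℝ} (h : specRad B < r) :
    ∀ᶠ k in atTop, ∀ i j, |(B ^ k) i j| ≤ r ^ k := by
  have hrad : spectralRadius ℂ (B.map Complex.ofReal) < ENNReal.ofReal r := by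
    refine lt_of_le_of_lt (iSup₂_le fun μ hμ => ?_)
      ((ENNReal.ofReal_lt_ofReal_iff ((specRad_nonneg B).trans_lt h)).2 h)
    rw [← ENNReal.ofReal_coe_nnreal, coe_nnnorm]
    exact ENNReal.ofReal_le_ofReal (norm_le_specRad B hμ)
  filter_upwards [spectrum.eventually_norm_pow_le_of_spectralRadius_lt hrad] with k hk i j
  have hpow : (B ^ k).map Complex.ofReal = B.map Complex.ofReal ^ k :=
    Complex.ofRealHom.mapMatrix.map_pow B k
  calc |(B ^ k) i j| = ‖((B ^ k).map Complex.ofReal) i j‖ := by simp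
    _ ≤ ‖(B ^ k).map Complex.ofReal‖ := mod_cast Matrix.nnnorm_apply_le_linfty_opNNNorm _ i j
    _ ≤ r ^ k := hpow ▸ hk

end LinftyNorm

end SpectralRadius

section Nonneg

variable {ι : Type*} [Fintype ι]

lemma Matrix.mulVec_apply_le_mulVec_apply {B : Matrix ι ι ℝ} (hB : ∀ i j, 0 ≤ B i j)
    {v w : ι → ℝ} (hvw : ∀ j, v j ≤ w j) (i : ι) : (B *ᵥ v) i ≤ (B *ᵥ w) i :=
  Finset.sum_le_sum fun j _ => mul_le_mul_of_nonneg_left (hvw j) (hB i j)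

lemma Matrix.mulVec_apply_pos {N : Matrix ι ι ℝ} (hN : ∀ i j, 0 < N i j) {z : ι → ℝ}
    (hz0 : ∀ j, 0 ≤ z j) (hz : z ≠ 0) (i : ι) : 0 < (N *ᵥ z) i := by
  obtain ⟨k, hk⟩ : ∃ k, z k ≠ 0 := by
    by_contra! h0
    exact hz (funext h0)
  exact (mul_pos (hN i k) ((hz0 k).lt_of_ne' hk)).trans_le <|
    Finset.single_le_sum (fun j _ => mul_nonneg (hN i j).le (hz0 j)) (Finset.mem_univ k)

lemma Matrix.norm_map_ofReal_mulVec_apply_le {B : Matrix ι ι ℝ} (hB : ∀ i j, 0 ≤ B i j)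
    (u : ι → ℂ) (i : ι) : ‖(B.map Complex.ofReal *ᵥ u) i‖ ≤ (B *ᵥ fun j => ‖u j‖) i := by
  refine (norm_sum_le _ _).trans_eq (Finset.sum_congr rfl fun j _ => ?_)
  change ‖(B i j : ℂ) * u j‖ = B i j * ‖u j‖
  rw [norm_mul, Complex.norm_real, Real.norm_of_nonneg (hB i j)]

end Nonneg

section CollatzWielandt

variable {n : ℕ}

lemma norm_le_of_mulVec_le {B : Matrix (Fin n) (Fin n) ℝ} (hB : ∀ i j, 0 ≤ B i j)
    {x : Fin n → ℝ} (hx : ∀ i, 0 < x i) {c : ℝ} (h : ∀ i, (B *ᵥ x) i ≤ c * x i) {μ : ℂ}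
    (hμ : μ ∈ spectrum ℂ (B.map Complex.ofReal)) : ‖μ‖ ≤ c := by
  classical
  obtain ⟨u, hu, hμu⟩ := Matrix.mem_spectrum_iff_exists_mulVec_eq.1 hμ
  obtain ⟨k, hk⟩ : ∃ k, u k ≠ 0 := by
    by_contra! h0
    exact hu (funext h0)
  obtain ⟨i, -, hi⟩ := Finset.exists_max_image Finset.univ (fun j => ‖u j‖ / x j)
    ⟨k, Finset.mem_univ k⟩
  set m := ‖u i‖ / x i
  have hm : 0 < m := (div_pos (norm_pos_iff.2 hk) (hx k)).trans_le (hi k (Finset.mem_univ _))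
  have hu_le : ∀ j, ‖u j‖ ≤ (m • x) j := fun j =>
    (div_le_iff₀ (hx j)).1 (hi j (Finset.mem_univ _))
  have key : ‖μ‖ * (m * x i) ≤ c * (m * x i) := calc
    ‖μ‖ * (m * x i) = ‖(B.map Complex.ofReal *ᵥ u) i‖ := by
      rw [hμu, Pi.smul_apply, smul_eq_mul, norm_mul, div_mul_cancel₀ _ (hx i).ne']
    _ ≤ (B *ᵥ fun j => ‖u j‖) i := Matrix.norm_map_ofReal_mulVec_apply_le hB u i
    _ ≤ (B *ᵥ (m • x)) i := Matrix.mulVec_apply_le_mulVec_apply hB hu_le i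
    _ = m * (B *ᵥ x) i := by rw [Matrix.mulVec_smul]; rfl
    _ ≤ m * (c * x i) := mul_le_mul_of_nonneg_left (h i) hm.le
    _ = c * (m * x i) := by ring
  exact le_of_mul_le_mul_right key (mul_pos hm (hx i))

lemma specRad_le_of_mulVec_le [NeZero n] {B : Matrix (Fin n) (Fin n) ℝ}
    (hB : ∀ i j, 0 ≤ B i j) {x : Fin n → ℝ} (hx : ∀ i, 0 < x i) {c : ℝ}
    (h : ∀ i, (B *ᵥ x) i ≤ c * x i) : specRad B ≤ c := by
  obtain ⟨μ, hμ, hμρ⟩ := exists_norm_eq_specRad B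
  exact hμρ ▸ norm_le_of_mulVec_le hB hx h hμ

lemma exists_nonneg_specRad_smul_le_mulVec [NeZero n] {B : Matrix (Fin n) (Fin n) ℝ}
    (hB : ∀ i j, 0 ≤ B i j) :
    ∃ y : Fin n → ℝ, (∀ i, 0 ≤ y i) ∧ y ≠ 0 ∧ ∀ i, specRad B * y i ≤ (B *ᵥ y) i := by
  obtain ⟨μ, hμ, hμρ⟩ := exists_norm_eq_specRad B
  obtain ⟨u, hu, hμu⟩ := Matrix.mem_spectrum_iff_exists_mulVec_eq.1 hμ
  refine ⟨fun j => ‖u j‖, fun j => norm_nonneg _,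
    fun h0 => hu (funext fun j => norm_eq_zero.1 (congrFun h0 j)), fun i => ?_⟩
  calc specRad B * ‖u i‖ = ‖(B.map Complex.ofReal *ᵥ u) i‖ := by
        rw [hμu, Pi.smul_apply, smul_eq_mul, norm_mul, hμρ]
    _ ≤ _ := Matrix.norm_map_ofReal_mulVec_apply_le hB u i

end CollatzWielandt

section Resolvent

variable {n : ℕ}

lemma isUnit_det_smul_one_sub_of_specRad_lt {C : Matrix (Fin n) (Fin n) ℝ} {s : ℝ}
    (h : specRad C < s) : IsUnit (s • 1 - C).det := by
  rw [isUnit_iff_ne_zero, Ne, ← Matrix.exists_mulVec_eq_zero_iff]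
  rintro ⟨v, hv, hCv⟩
  rw [Matrix.sub_mulVec, Matrix.smul_mulVec, Matrix.one_mulVec, sub_eq_zero] at hCv
  exact (le_abs_self s).not_gt ((abs_le_specRad_of_mulVec_eq hv hCv.symm).trans_lt h)

lemma tendsto_pow_inv_smul_of_specRad_lt {C : Matrix (Fin n) (Fin n) ℝ} {s : ℝ}
    (h : specRad C < s) : Tendsto (fun k => (s⁻¹ • C) ^ k) atTop (𝓝 0) := by
  obtain ⟨r, hCr, hrs⟩ := exists_between h
  have hr : 0 < r := (specRad_nonneg C).trans_lt hCr
  have hs : 0 < s := hr.trans hrs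
  refine tendsto_pi_nhds.2 fun i => tendsto_pi_nhds.2 fun j => ?_
  refine squeeze_zero_norm' ?_ (tendsto_pow_atTop_nhds_zero_of_lt_one (r := r / s)
    (by positivity) ((div_lt_one hs).2 hrs))
  filter_upwards [eventually_abs_pow_apply_le C hCr] with k hk
  rw [smul_pow, Matrix.smul_apply, smul_eq_mul, Real.norm_eq_abs, abs_mul, abs_pow,
    abs_of_pos (inv_pos.2 hs), div_eq_inv_mul, mul_pow]
  exact mul_le_mul_of_nonneg_left (hk i j) (by positivity)

lemma inv_smul_one_sub_nonneg {C : Matrix (Fin n) (Fin n) ℝ} (hC : ∀ i j, 0 ≤ C i j) {s : ℝ}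
    (h : specRad C < s) (i j : Fin n) : 0 ≤ (s • 1 - C)⁻¹ i j := by
  have hs : 0 < s := (specRad_nonneg C).trans_lt h
  set N := (s • 1 - C)⁻¹
  set x := s⁻¹ • C
  have hNx : N * (1 - x) = s⁻¹ • 1 := calc
    N * (1 - x) = s⁻¹ • (N * (s • 1 - C)) := by
      simp only [x, Matrix.mul_sub, Matrix.mul_smul, Matrix.mul_one, smul_sub, smul_smul,
        inv_mul_cancel₀ hs.ne', one_smul]
    _ = s⁻¹ • 1 := by rw [Matrix.nonsing_inv_mul _ (isUnit_det_smul_one_sub_of_specRad_lt h)]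
  have hpartial (k : ℕ) : N * (1 - x ^ k) = s⁻¹ • ∑ m ∈ Finset.range k, x ^ m := by
    rw [← mul_neg_geom_sum, ← Matrix.mul_assoc, hNx, Matrix.smul_mul, Matrix.one_mul]
  have hlim : Tendsto (fun k => N * (1 - x ^ k)) atTop (𝓝 N) := by
    have := ((tendsto_pow_inv_smul_of_specRad_lt h).const_sub 1).const_mul N
    rwa [sub_zero, Matrix.mul_one] at this
  refine ge_of_tendsto ((tendsto_pi_nhds.1 (tendsto_pi_nhds.1 hlim i)) j)
    (Eventually.of_forall fun k => ?_)
  rw [hpartial, Matrix.smul_apply, Matrix.sum_apply]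
  exact mul_nonneg (inv_nonneg.2 hs.le) (Finset.sum_nonneg fun m _ =>
    Matrix.pow_apply_nonneg (fun a b => mul_nonneg (inv_nonneg.2 hs.le) (hC a b)) m i j)

end Resolvent

section PerronFrobenius

variable {n : ℕ} {B : Matrix (Fin n) (Fin n) ℝ}

lemma le_specRad_of_smul_le_mulVec [NeZero n] (hB : ∀ i j, 0 ≤ B i j) {w : Fin n → ℝ}
    (hw : ∀ i, 0 < w i) {c : ℝ} (h : ∀ i, c * w i ≤ (B *ᵥ w) i) : c ≤ specRad B := by
  by_contra! hlt
  have hv : ∀ i, ((c • 1 - B) *ᵥ w) i ≤ 0 := fun i => by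
    simpa [Matrix.sub_mulVec, Matrix.smul_mulVec] using h i
  have hw_eq : w = (c • 1 - B)⁻¹ *ᵥ ((c • 1 - B) *ᵥ w) := by
    rw [Matrix.mulVec_mulVec,
      Matrix.nonsing_inv_mul _ (isUnit_det_smul_one_sub_of_specRad_lt hlt), Matrix.one_mulVec]
  have : w 0 ≤ 0 := by
    rw [hw_eq]
    exact Finset.sum_nonpos (s := Finset.univ) fun j _ =>
      mul_nonpos_of_nonneg_of_nonpos (inv_smul_one_sub_nonneg hB hlt 0 j) (hv j)
  exact (hw 0).not_ge this

lemma lt_specRad_of_smul_lt_mulVec [NeZero n] (hB : ∀ i j, 0 ≤ B i j) {w : Fin n → ℝ}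
    (hw : ∀ i, 0 < w i) {c : ℝ} (h : ∀ i, c * w i < (B *ᵥ w) i) : c < specRad B := by
  obtain ⟨i, -, hi⟩ := Finset.exists_min_image Finset.univ (fun j => (B *ᵥ w) j / w j)
    Finset.univ_nonempty
  exact ((lt_div_iff₀ (hw i)).2 (h i)).trans_le <| le_specRad_of_smul_le_mulVec hB hw fun j =>
    (le_div_iff₀ (hw j)).1 (hi j (Finset.mem_univ j))

lemma IsIrreducibleMatrix.inv_smul_one_sub_pos (hirr : IsIrreducibleMatrix B)
    (hB : ∀ i j, 0 ≤ B i j) {s : ℝ} (h : specRad B < s) (i j : Fin n) :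
    0 < (s • 1 - B)⁻¹ i j := by
  have hs : 0 < s := (specRad_nonneg B).trans_lt h
  set N := (s • 1 - B)⁻¹
  have hN : s • N = 1 + N * B := by
    have := Matrix.nonsing_inv_mul _ (isUnit_det_smul_one_sub_of_specRad_lt h)
    rw [Matrix.mul_sub, Matrix.mul_smul, Matrix.mul_one] at this
    rw [← this, sub_add_cancel]
  have hentry : ∀ l, s * N i l = (1 : Matrix (Fin n) (Fin n) ℝ) i l + ∑ k, N i k * B k l :=
    fun l => by simpa [Matrix.mul_apply] using congrFun (congrFun hN i) l
  have hsum : ∀ k l, N i k * B k l ≤ ∑ m, N i m * B m l := fun k l =>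
    Finset.single_le_sum (fun m _ => mul_nonneg (inv_smul_one_sub_nonneg hB h i m) (hB m l))
      (Finset.mem_univ k)
  induction hirr i j with
  | refl =>
    have : 1 ≤ s * N i i := by
      rw [hentry, Matrix.one_apply_eq]
      exact le_add_of_nonneg_right
        ((mul_nonneg (inv_smul_one_sub_nonneg hB h i i) (hB i i)).trans (hsum i i))
    exact pos_of_mul_pos_right (one_pos.trans_le this) hs.le
  | @tail k l _ hkl ih =>
    have hpos : 0 < N i k * B k l := mul_pos ih ((hB k l).lt_of_ne' hkl)
    have : 0 < s * N i l := by
      rw [hentry]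
      exact add_pos_of_nonneg_of_pos (Matrix.zero_le_one_elem i l) (hpos.trans_le (hsum k l))
    exact pos_of_mul_pos_right this hs.le

lemma IsIrreducibleMatrix.mulVec_eq_of_specRad_smul_le [NeZero n]
    (hirr : IsIrreducibleMatrix B) (hB : ∀ i j, 0 ≤ B i j) {y : Fin n → ℝ}
    (hy0 : ∀ i, 0 ≤ y i) (hy : y ≠ 0)
    (h : ∀ i, specRad B * y i ≤ (B *ᵥ y) i) : B *ᵥ y = specRad B • y ∧ ∀ i, 0 < y i := by
  set ρ := specRad B
  have hρ : ρ < ρ + 1 := lt_add_one ρ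
  have hunit := isUnit_det_smul_one_sub_of_specRad_lt hρ
  set N := ((ρ + 1) • 1 - B)⁻¹
  have hNpos := hirr.inv_smul_one_sub_pos hB hρ
  have hcomm : B * N = N * B := by
    have h₁ : N * ((ρ + 1) • 1 - B) = 1 := Matrix.nonsing_inv_mul _ hunit
    have h₂ : ((ρ + 1) • 1 - B) * N = 1 := Matrix.mul_nonsing_inv _ hunit
    rw [Matrix.mul_sub, Matrix.mul_smul, Matrix.mul_one] at h₁
    rw [Matrix.sub_mul, Matrix.smul_mul, Matrix.one_mul] at h₂
    exact sub_right_injective (h₂.trans h₁.symm)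
  have heq : B *ᵥ y = ρ • y := by
    by_contra hne
    have hz : B *ᵥ y - ρ • y ≠ 0 := sub_ne_zero.2 hne
    have hw : ∀ i, 0 < (N *ᵥ y) i := Matrix.mulVec_apply_pos hNpos hy0 hy
    -- `N` commutes with `B` and has positive entries, so it makes the inequality strict
    have hBw : ∀ i, ρ * (N *ᵥ y) i < (B *ᵥ (N *ᵥ y)) i := fun i => by
      have hpos := Matrix.mulVec_apply_pos (z := B *ᵥ y - ρ • y) hNpos
        (fun j => sub_nonneg.2 (h j)) hz i
      rw [Matrix.mulVec_sub, Matrix.mulVec_smul, Matrix.mulVec_mulVec, ← hcomm,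
        ← Matrix.mulVec_mulVec] at hpos
      simpa using hpos
    exact (lt_specRad_of_smul_lt_mulVec hB hw hBw).false
  refine ⟨heq, fun i => ?_⟩
  have hy_eq : N *ᵥ y = y := by
    have hres : ((ρ + 1) • 1 - B) *ᵥ y = y := by
      rw [Matrix.sub_mulVec, Matrix.smul_mulVec, Matrix.one_mulVec, heq, ← sub_smul]
      simp
    conv_rhs => rw [← Matrix.one_mulVec y, ← Matrix.nonsing_inv_mul _ hunit,
      ← Matrix.mulVec_mulVec, hres]
  rw [← hy_eq]
  exact Matrix.mulVec_apply_pos hNpos hy0 hy i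

lemma IsIrreducibleMatrix.exists_pos_mulVec_eq_specRad_smul [NeZero n]
    (hirr : IsIrreducibleMatrix B) (hB : ∀ i j, 0 ≤ B i j) :
    ∃ x : Fin n → ℝ, (∀ i, 0 < x i) ∧ B *ᵥ x = specRad B • x := by
  obtain ⟨y, hy0, hy, h⟩ := exists_nonneg_specRad_smul_le_mulVec hB
  obtain ⟨heq, hpos⟩ := hirr.mulVec_eq_of_specRad_smul_le hB hy0 hy h
  exact ⟨y, hpos, heq⟩

lemma IsIrreducibleMatrix.specRad_lt_of_le_of_ne [NeZero n] (hirr : IsIrreducibleMatrix B)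
    (hB : ∀ i j, 0 ≤ B i j) {C : Matrix (Fin n) (Fin n) ℝ} (hC : ∀ i j, 0 ≤ C i j)
    (hCB : ∀ i j, C i j ≤ B i j) (hne : C ≠ B) : specRad C < specRad B := by
  by_contra! hle
  obtain ⟨y, hy0, hy, hCy⟩ := exists_nonneg_specRad_smul_le_mulVec hC
  have hCyB : ∀ i, (C *ᵥ y) i ≤ (B *ᵥ y) i := fun i =>
    Finset.sum_le_sum (s := Finset.univ) fun j _ =>
      mul_le_mul_of_nonneg_right (hCB i j) (hy0 j)
  have hBy : ∀ i, specRad B * y i ≤ (C *ᵥ y) i := fun i =>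
    (mul_le_mul_of_nonneg_right hle (hy0 i)).trans (hCy i)
  obtain ⟨heq, hpos⟩ :=
    hirr.mulVec_eq_of_specRad_smul_le hB hy0 hy fun i => (hBy i).trans (hCyB i)
  apply hne
  ext i j
  have hsum : ∑ k, (B i k - C i k) * y k = 0 := by
    have := hBy i
    rw [← smul_eq_mul, ← Pi.smul_apply, ← heq] at this
    simp only [sub_mul, Finset.sum_sub_distrib]
    exact sub_eq_zero.2 (le_antisymm this (hCyB i))
  have hterm := (Finset.sum_eq_zero_iff_of_nonneg fun k _ =>
    mul_nonneg (sub_nonneg.2 (hCB i k)) (hy0 k)).1 hsum j (Finset.mem_univ j)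
  exact (sub_eq_zero.1 ((mul_eq_zero.1 hterm).resolve_right (hpos j).ne')).symm

end PerronFrobenius

section FSAI

variable {n : ℕ}

lemma IsIrreducibleMatrix.of_smul_one_sub {B : Matrix (Fin n) (Fin n) ℝ} {s : ℝ}
    (h : IsIrreducibleMatrix (s • 1 - B)) : IsIrreducibleMatrix B := fun i j =>
  (h i j).lift' id fun a b hab => by
    by_cases hab' : a = b
    · exact hab' ▸ Relation.ReflTransGen.refl
    · refine Relation.ReflTransGen.single fun h0 => hab ?_
      simpa [Matrix.one_apply_ne hab'] using h0

open Classical in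
/-- The principal submatrix `B[J, J]`, padded with zeros to the size of `B`. -/
noncomputable def principalPart (B : Matrix (Fin n) (Fin n) ℝ) (J : Set (Fin n)) :
    Matrix (Fin n) (Fin n) ℝ :=
  Matrix.of fun p q => if p ∈ J ∧ q ∈ J then B p q else 0

variable {B : Matrix (Fin n) (Fin n) ℝ} {J : Set (Fin n)}

lemma principalPart_nonneg (hB : ∀ i j, 0 ≤ B i j) (p q : Fin n) :
    0 ≤ principalPart B J p q := by
  simp only [principalPart, Matrix.of_apply]
  split_ifs <;> simp [hB p q]

lemma principalPart_le (hB : ∀ i j, 0 ≤ B i j) (p q : Fin n) :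
    principalPart B J p q ≤ B p q := by
  simp only [principalPart, Matrix.of_apply]
  split_ifs <;> simp [hB p q]

lemma IsIrreducibleMatrix.principalPart_ne (hirr : IsIrreducibleMatrix B) {l i : Fin n}
    (hl : l ∉ J) (hi : i ∈ J) : principalPart B J ≠ B := by
  rcases (hirr l i).cases_head with rfl | ⟨c, hlc, -⟩
  · exact absurd hi hl
  · intro h
    apply hlc
    rw [← h]
    simp [principalPart, hl]

lemma vecMul_smul_one_sub_principalPart {s : ℝ} {l : Fin n → ℝ} {i : Fin n} (hi : i ∈ J)
    (hl : ∀ k ∉ J, l k = 0) (h : ∀ j ∈ J, (l ᵥ* (s • 1 - B)) j = if i = j then 1 else 0) :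
    l ᵥ* (s • 1 - principalPart B J) = Pi.single i 1 := by
  ext j
  by_cases hj : j ∈ J
  · have hterm : ∀ k, l k * (s • 1 - principalPart B J) k j = l k * (s • 1 - B) k j := by
      intro k
      by_cases hk : k ∈ J
      · simp [principalPart, hk, hj]
      · simp [hl k hk]
    have hcol := h j hj
    simp only [Matrix.vecMul, dotProduct] at hcol ⊢
    rw [Finset.sum_congr rfl fun k _ => hterm k, hcol]
    simp [Pi.single_apply, eq_comm]
  · have hterm : ∀ k, l k * (s • 1 - principalPart B J) k j = 0 := by
      intro k
      by_cases hk : k ∈ J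
      · simp [principalPart, hk, hj, Matrix.one_apply_ne (fun e : k = j => hj (e ▸ hk))]
      · simp [hl k hk]
    simp only [Matrix.vecMul, dotProduct]
    rw [Finset.sum_eq_zero fun k _ => hterm k,
      Pi.single_eq_of_ne fun e : j = i => hj (e ▸ hi)]

lemma IsFSAILowerFactor.nonneg (hB : ∀ i j, 0 ≤ B i j) (hirr : IsIrreducibleMatrix B)
    {S : Set (Fin n × Fin n)} (hdiag : ∀ i, (i, i) ∈ S) (hrow : ∀ i, ∃ l, (i, l) ∉ S)
    {L : Matrix (Fin n) (Fin n) ℝ} (hL : IsFSAILowerFactor (specRad B • 1 - B) L S)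
    (i k : Fin n) : 0 ≤ L i k := by
  have : NeZero n := ⟨i.pos.ne'⟩
  obtain ⟨l, hl⟩ := hrow i
  set J := {k | (i, k) ∈ S}
  set P := principalPart B J
  have hlt : specRad P < specRad B := hirr.specRad_lt_of_le_of_ne hB (principalPart_nonneg hB)
    (principalPart_le hB) (hirr.principalPart_ne hl (hdiag i))
  have hrow_eq : L i ᵥ* (specRad B • 1 - P) = Pi.single i 1 :=
    vecMul_smul_one_sub_principalPart (hdiag i) (fun k hk => hL.2.1 (i, k) hk)
      (fun j hj => hL.2.2 (i, j) hj)
  have hLi : L i = (specRad B • 1 - P)⁻¹ i := calc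
    L i = L i ᵥ* ((specRad B • 1 - P) * (specRad B • 1 - P)⁻¹) := by
        rw [Matrix.mul_nonsing_inv _ (isUnit_det_smul_one_sub_of_specRad_lt hlt),
          Matrix.vecMul_one]
    _ = (specRad B • 1 - P)⁻¹ i := by
        rw [← Matrix.vecMul_vecMul, hrow_eq, Matrix.single_one_vecMul]
        rfl
  rw [hLi]
  exact inv_smul_one_sub_nonneg (principalPart_nonneg hB) hlt i k

lemma IsFSAILowerFactor.isZMatrix_mul {A L : Matrix (Fin n) (Fin n) ℝ}
    {S : Set (Fin n × Fin n)} (hA : IsZMatrix A) (hL0 : ∀ i k, 0 ≤ L i k)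
    (hL : IsFSAILowerFactor A L S) : IsZMatrix (L * A) := by
  intro i j hij
  by_cases hS : (i, j) ∈ S
  · simpa [hij] using (hL.2.2 (i, j) hS).le
  · rw [Matrix.mul_apply]
    refine Finset.sum_nonpos fun k _ => ?_
    by_cases hkj : k = j
    · rw [hkj, hL.2.1 (i, j) hS, zero_mul]
    · exact mul_nonpos_of_nonneg_of_nonpos (hL0 i k) (hA k j hkj)

lemma exists_notMem_row_of_subset_lower {S : Set (Fin n × Fin n)} (hS : S ⊆ {p | p.2 ≤ p.1})
    {a b : Fin n} (ha : ∀ i, i ≤ a) (hab : (a, b) ∉ S) (i : Fin n) : ∃ l, (i, l) ∉ S := by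
  rcases (ha i).lt_or_eq with hi | rfl
  · exact ⟨a, fun h => (hS h : a ≤ i).not_gt hi⟩
  · exact ⟨b, hab⟩

end FSAI

lemma isSingularMMatrix_of_mulVec_eq_zero {n : ℕ} [NeZero n] {M : Matrix (Fin n) (Fin n) ℝ}
    (hM : IsZMatrix M) (hdiag : ∀ i, M i i = 1) {x : Fin n → ℝ} (hx : ∀ i, 0 < x i)
    (hMx : M *ᵥ x = 0) : IsSingularMMatrix M := by
  have hB : ∀ i j, 0 ≤ (1 - M) i j := fun i j => by
    rcases eq_or_ne i j with rfl | hij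
    · simp [hdiag]
    · simpa [Matrix.one_apply_ne hij] using hM i j hij
  have hBx : (1 - M) *ᵥ x = x := by rw [Matrix.sub_mulVec, Matrix.one_mulVec, hMx, sub_zero]
  have hx0 : x ≠ 0 := fun h0 => (hx 0).ne' (congrFun h0 0)
  have hge := abs_le_specRad_of_mulVec_eq hx0 (t := 1) (by rw [hBx, one_smul])
  have hrad : specRad (1 - M) = 1 := le_antisymm
    (specRad_le_of_mulVec_le hB hx fun i => by rw [hBx, one_mul]) (by simpa using hge)
  exact ⟨hM, 1 - M, hB, by rw [hrad, one_smul, sub_sub_cancel]⟩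

theorem fsai_LA_singular_M (n : ℕ) (hn : 2 ≤ n)
    (A : Matrix (Fin n) (Fin n) ℝ)
    (hA : IsSingularMMatrix A) (hirr : IsIrreducibleMatrix A)
    (S : Set (Fin n × Fin n))
    (hS1 : S ⊆ {p : Fin n × Fin n | p.2 ≤ p.1})
    (hS2 : ∀ i : Fin n, (i, i) ∈ S)
    (hS3 : ((⟨n - 1, by omega⟩ : Fin n), (⟨n - 2, by omega⟩ : Fin n)) ∉ S)
    (L : Matrix (Fin n) (Fin n) ℝ) (hL : IsFSAILowerFactor A L S) :
    IsSingularMMatrix (L * A) := by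
  have : NeZero n := ⟨by omega⟩
  obtain ⟨hZA, B, hB, rfl⟩ := hA
  have hBirr : IsIrreducibleMatrix B := hirr.of_smul_one_sub
  obtain ⟨x, hx, hBx⟩ := hBirr.exists_pos_mulVec_eq_specRad_smul hB
  have hrow := exists_notMem_row_of_subset_lower hS1
    (fun i => Fin.le_iff_val_le_val.2 (Nat.le_sub_one_of_lt i.2)) hS3
  have hL0 := hL.nonneg hB hBirr hS2 hrow
  have hAx : (specRad B • 1 - B) *ᵥ x = 0 := by
    rw [Matrix.sub_mulVec, Matrix.smul_mulVec, Matrix.one_mulVec, hBx, sub_self]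
  refine isSingularMMatrix_of_mulVec_eq_zero (hL.isZMatrix_mul hZA hL0)
    (fun i => by simpa using hL.2.2 (i, i) (hS2 i)) hx ?_
  rw [← Matrix.mulVec_mulVec, hAx, Matrix.mulVec_zero]
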